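/- arXiv:1607.01843 — 2 statements merged into one kernel-verified Lean document; each statement's English description precedes it below -/
import Mathlib

section
/- Let f be analytic on the unit disk with f(0)=0, f'(0)=1, satisfying Re[(1-z^2)f'(z)] > 0 for all |z|<1. Then the first logarithmic coefficient γ_1 = a_2/2 satisfies |γ_1| ≤ 1/2, and the bound is sharp. -/
open Metric Complex

open scoped ComplexConjugate

/-! For `f` in the class, `p = (1 - z²) f'` is holomorphic on the disc with `p 0 = 1`, positive real
part and `p' 0 = f'' 0 = 2 a₂`, so Carathéodory's inequality `‖p' 0‖ ≤ 2` gives `‖a₂‖ ≤ 1`.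
Equality holds for `f z = z / (1 - z)`, for which `p z = (1 + z) / (1 - z)`. -/

theorem norm_sub_lt_norm_add_conj_of_re_pos {w a : ℂ} (hw : 0 < w.re) (ha : 0 < a.re) :
    ‖w - a‖ < ‖w + conj a‖ := by
  rw [← sq_lt_sq₀ (norm_nonneg _) (norm_nonneg _), Complex.sq_norm, Complex.sq_norm, normSq_apply,
    normSq_apply]
  simp only [sub_re, sub_im, add_re, add_im, conj_re, conj_im]
  nlinarith [mul_pos hw ha]

/-- Carathéodory's inequality, via the Schwarz lemma applied to the Cayley transform
`(p - p c) / (p + conj (p c))`, which maps the right half-plane into the unit disc. -/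
theorem norm_deriv_le_of_re_pos {p : ℂ → ℂ} {c : ℂ} {R : ℝ} (hp : DifferentiableOn ℂ p (ball c R))
    (hR : 0 < R) (hre : ∀ z ∈ ball c R, 0 < (p z).re) : ‖deriv p c‖ ≤ 2 * (p c).re / R := by
  have hc : c ∈ ball c R := mem_ball_self hR
  set a := p c
  have ha : 0 < a.re := hre c hc
  have hden : ∀ z ∈ ball c R, p z + conj a ≠ 0 := fun z hz h => by
    have := congrArg re h
    simp only [add_re, conj_re, zero_re] at this
    linarith [hre z hz]
  set g : ℂ → ℂ := fun z => (p z - a) / (p z + conj a)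
  have hg : DifferentiableOn ℂ g (ball c R) :=
    (hp.sub_const a).div (hp.add_const _) hden
  have hmaps : Set.MapsTo g (ball c R) (closedBall (g c) 1) := by
    intro z hz
    rw [mem_closedBall, show g c = 0 by simp [g, a], dist_zero_right, norm_div,
      div_le_one (norm_pos_iff.mpr (hden z hz))]
    exact (norm_sub_lt_norm_add_conj_of_re_pos (hre z hz) ha).le
  have hpc : HasDerivAt p (deriv p c) c :=
    (hp.differentiableAt (isOpen_ball.mem_nhds hc)).hasDerivAt
  have hgc : deriv g c = deriv p c / (2 * a.re) := by
    have hg' : HasDerivAt g _ c := (hpc.sub_const a).div (hpc.add_const _) (hden c hc)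
    have ha' : (a.re : ℂ) ≠ 0 := ofReal_ne_zero.mpr ha.ne'
    rw [hg'.deriv]
    simp only [a, sub_self, zero_mul, sub_zero, add_conj]
    push_cast
    field_simp
  have hschwarz := norm_deriv_le_div_of_mapsTo_ball hg hmaps hR
  rw [hgc, norm_div, norm_mul, norm_real, Real.norm_of_nonneg ha.le, Complex.norm_two,
    div_le_div_iff₀ (by positivity) hR] at hschwarz
  rw [le_div_iff₀ hR]
  linarith

theorem deriv_one_sub_sq_mul_at_zero {g : ℂ → ℂ} (hg : DifferentiableAt ℂ g 0) :
    deriv (fun z => (1 - z ^ 2) * g z) 0 = deriv g 0 := by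
  have h : HasDerivAt (fun z : ℂ => 1 - z ^ 2) (-(2 * 0 ^ 1)) 0 := by
    simpa using (hasDerivAt_pow 2 (0 : ℂ)).const_sub 1
  have hmul : HasDerivAt (fun z => (1 - z ^ 2) * g z) _ 0 := h.mul hg.hasDerivAt
  rw [hmul.deriv]
  ring

theorem norm_iteratedDeriv_two_le_of_re_pos {f : ℂ → ℂ} (hf : AnalyticOn ℂ f (ball 0 1))
    (hf' : deriv f 0 = 1) (hre : ∀ z ∈ ball (0 : ℂ) 1, 0 < ((1 - z ^ 2) * deriv f z).re) :
    ‖iteratedDeriv 2 f 0‖ ≤ 2 := by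
  have hf'' : DifferentiableOn ℂ (deriv f) (ball 0 1) :=
    (isOpen_ball.analyticOn_iff_analyticOnNhd.mp hf).deriv.differentiableOn
  have hp : DifferentiableOn ℂ (fun z => (1 - z ^ 2) * deriv f z) (ball 0 1) :=
    (Differentiable.differentiableOn (by fun_prop)).mul hf''
  have hcara := norm_deriv_le_of_re_pos hp one_pos hre
  rw [deriv_one_sub_sq_mul_at_zero (hf''.differentiableAt (ball_mem_nhds 0 one_pos))] at hcara
  simpa [iteratedDeriv_succ, hf'] using hcara

theorem one_sub_ne_zero_of_norm_lt_one {z : ℂ} (hz : ‖z‖ < 1) : 1 - z ≠ 0 := fun h => by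
  simp [← sub_eq_zero.mp h] at hz

theorem hasDerivAt_div_one_sub {z : ℂ} (hz : 1 - z ≠ 0) :
    HasDerivAt (fun w => w / (1 - w)) ((1 - z) ^ 2)⁻¹ z := by
  refine ((hasDerivAt_id z).div ((hasDerivAt_id z).const_sub 1) hz).congr_deriv ?_
  simp only [id]
  field_simp
  ring

theorem re_one_add_div_one_sub_pos {z : ℂ} (hz : ‖z‖ < 1) : 0 < ((1 + z) / (1 - z)).re := by
  have hnum : (1 + z).re * (1 - z).re + (1 + z).im * (1 - z).im = 1 - ‖z‖ ^ 2 := by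
    rw [Complex.sq_norm, normSq_apply]
    simp only [add_re, sub_re, one_re, add_im, sub_im, one_im]
    ring
  rw [div_re, ← add_div, hnum]
  exact div_pos (by nlinarith [norm_nonneg z]) (normSq_pos.mpr (one_sub_ne_zero_of_norm_lt_one hz))

theorem iteratedDeriv_two_div_one_sub_zero : iteratedDeriv 2 (fun w : ℂ => w / (1 - w)) 0 = 2 := by
  have hderiv : deriv (fun w : ℂ => w / (1 - w)) =ᶠ[nhds 0] fun z => ((1 - z) ^ 2)⁻¹ := by
    filter_upwards [isOpen_ne.mem_nhds (zero_ne_one : (0 : ℂ) ≠ 1)] with z hz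
    exact (hasDerivAt_div_one_sub (sub_ne_zero.mpr (Ne.symm hz))).deriv
  have h : HasDerivAt (fun z : ℂ => ((1 - z) ^ 2)⁻¹) _ 0 :=
    (((hasDerivAt_id (0 : ℂ)).const_sub 1).pow 2).inv (by norm_num)
  rw [iteratedDeriv_succ, iteratedDeriv_one, hderiv.deriv_eq, h.deriv]
  norm_num

theorem F2_gamma1 :
    (∀ f : ℂ → ℂ, AnalyticOn ℂ f (ball 0 1) → f 0 = 0 → deriv f 0 = 1 →
      (∀ z ∈ ball (0:ℂ) 1, 0 < ((1 - z^2) * deriv f z).re) →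
      ‖(iteratedDeriv 2 f 0 / 2) / 2‖ ≤ 1/2) ∧
    ∃ f : ℂ → ℂ, AnalyticOn ℂ f (ball 0 1) ∧ f 0 = 0 ∧ deriv f 0 = 1 ∧
      (∀ z ∈ ball (0:ℂ) 1, 0 < ((1 - z^2) * deriv f z).re) ∧
      ‖(iteratedDeriv 2 f 0 / 2) / 2‖ = 1/2 := by
  refine ⟨fun f hf _ hf' hre => ?_, fun w => w / (1 - w), ?_, by simp, ?_, ?_, ?_⟩
  · have := norm_iteratedDeriv_two_le_of_re_pos hf hf' hre
    rw [norm_div, norm_div, Complex.norm_two]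
    linarith
  · exact analyticOn_id.div (analyticOn_const.sub analyticOn_id) fun z hz =>
      one_sub_ne_zero_of_norm_lt_one (mem_ball_zero_iff.mp hz)
  · simp [(hasDerivAt_div_one_sub (by norm_num : (1 : ℂ) - 0 ≠ 0)).deriv]
  · intro z hz
    rw [mem_ball_zero_iff] at hz
    have hz1 := one_sub_ne_zero_of_norm_lt_one hz
    rw [(hasDerivAt_div_one_sub hz1).deriv,
      show (1 - z ^ 2) * ((1 - z) ^ 2)⁻¹ = (1 + z) / (1 - z) by field_simp; ring]
    exact re_one_add_div_one_sub_pos hz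
  · rw [iteratedDeriv_two_div_one_sub_zero]
    norm_num
end

section
/- Let f be analytic on the unit disk with f(0)=0, f'(0)=1, Re[(1-z+z^2)f'(z)] > 0 on the disk, with Taylor coefficients a_n. Then γ_2 = (a_3 - a_2^2/2)/2 satisfies |γ_2| ≤ 2/5, and this bound is sharp. -/
/-!
Put `p = (1 - z + z²) f' = 1 + c₁ z + c₂ z² + ⋯`, so that `Re p > 0` and
`γ₂ = (c₂ - c₁²/2)/6 + (c₁² + 2c₁ - 3)/48`. Since `w = (p - 1)/(p + 1)` is a Schwarz function,
the Schwarz–Pick lemma applied to `w(z)/z` gives `|c₂ - c₁²/2| ≤ 2 - |c₁|²/2`, and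
`|c₁² + 2c₁ - 3| ≤ 16/5 + 4|c₁|²` holds for every complex `c₁`; the two bounds add up to
`1/3 + 1/15 = 2/5`. Equality holds for `c₁ = -1/5`, `c₂ - c₁²/2 = -99/50`, that is for
`p(z) = (1 - z²)/(1 + z/5 + z²)` and `f = (5/6) log((1 + z/5 + z²)/(1 - z + z²))`.
-/

open Metric Complex Set Filter
open scoped ComplexConjugate Topology

theorem normSq_one_sub_conj_mul_sub_normSq_sub (a u : ℂ) :
    normSq (1 - conj a * u) - normSq (u - a) = (1 - normSq a) * (1 - normSq u) := by
  simp only [normSq_apply, sub_re, sub_im, mul_re, mul_im, conj_re, conj_im, one_re, one_im]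
  ring

theorem norm_sub_div_one_sub_conj_mul_le_one {a u : ℂ} (ha : ‖a‖ < 1) (hu : ‖u‖ ≤ 1) :
    ‖(u - a) / (1 - conj a * u)‖ ≤ 1 := by
  have hsq : normSq (u - a) ≤ normSq (1 - conj a * u) := by
    have ha' : normSq a < 1 := by rw [← Complex.sq_norm]; nlinarith [norm_nonneg a]
    have hu' : normSq u ≤ 1 := by rw [← Complex.sq_norm]; nlinarith [norm_nonneg u]
    nlinarith [normSq_one_sub_conj_mul_sub_normSq_sub a u]
  rw [norm_div]
  refine div_le_one_of_le₀ ?_ (norm_nonneg _)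
  rw [norm_def, norm_def]
  exact Real.sqrt_le_sqrt hsq

theorem one_sub_conj_mul_ne_zero {a u : ℂ} (ha : ‖a‖ < 1) (hu : ‖u‖ ≤ 1) :
    1 - conj a * u ≠ 0 := by
  refine sub_ne_zero.2 fun h => ?_
  have : ‖conj a * u‖ < 1 := by
    rw [norm_mul, RCLike.norm_conj]
    nlinarith [norm_nonneg a, norm_nonneg u]
  rw [← h, norm_one] at this
  exact lt_irrefl _ this

theorem hasDerivAt_sub_div_one_sub_conj_mul {a : ℂ} (ha : ‖a‖ < 1) :
    HasDerivAt (fun u => (u - a) / (1 - conj a * u)) (1 / (1 - ‖a‖ ^ 2 : ℝ)) a := by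
  have hden := one_sub_conj_mul_ne_zero ha ha.le
  have h : HasDerivAt (fun u => (u - a) / (1 - conj a * u))
      ((1 * (1 - conj a * a) - (a - a) * -(conj a * 1)) / (1 - conj a * a) ^ 2) a :=
    ((hasDerivAt_id a).sub_const a).div (((hasDerivAt_id a).const_mul (conj a)).const_sub 1) hden
  convert h using 1
  have hconj : conj a * a = ((‖a‖ ^ 2 : ℝ) : ℂ) := by
    rw [mul_comm, mul_conj, normSq_eq_norm_sq]
  rw [hconj] at hden ⊢
  push_cast at hden ⊢
  field_simp
  ring

theorem norm_deriv_le_one_sub_sq_norm {φ : ℂ → ℂ} (hd : DifferentiableOn ℂ φ (ball 0 1))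
    (hmaps : MapsTo φ (ball 0 1) (closedBall 0 1)) :
    ‖deriv φ 0‖ ≤ 1 - ‖φ 0‖ ^ 2 := by
  have h0 : (0 : ℂ) ∈ ball (0 : ℂ) 1 := mem_ball_self one_pos
  set a := φ 0
  have ha : ‖a‖ ≤ 1 := by simpa using hmaps h0
  rcases ha.lt_or_eq with ha | ha
  · set M : ℂ → ℂ := fun u => (u - a) / (1 - conj a * u)
    have hMmaps : MapsTo (M ∘ φ) (ball 0 1) (closedBall ((M ∘ φ) 0) 1) := fun z hz => by
      simpa [M, a] using norm_sub_div_one_sub_conj_mul_le_one ha (by simpa using hmaps hz)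
    have hMd : DifferentiableOn ℂ (M ∘ φ) (ball 0 1) := fun z hz => by
      refine DifferentiableWithinAt.comp z ?_ (hd z hz) (mapsTo_univ _ _)
      exact ((differentiableAt_id.sub_const a).div
        ((differentiableAt_id.const_mul _).const_sub 1)
        (one_sub_conj_mul_ne_zero ha (by simpa using hmaps hz))).differentiableWithinAt
    have hchain : HasDerivAt (M ∘ φ) (1 / (1 - ‖a‖ ^ 2 : ℝ) * deriv φ 0) 0 :=
      (hasDerivAt_sub_div_one_sub_conj_mul ha).comp 0
        (hd.differentiableAt (isOpen_ball.mem_nhds h0)).hasDerivAt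
    have hpos : 0 < 1 - ‖a‖ ^ 2 := by nlinarith [norm_nonneg a]
    have hschwarz := Complex.norm_deriv_le_div_of_mapsTo_ball hMd hMmaps one_pos
    rwa [hchain.deriv, norm_mul, norm_div, norm_one, norm_real, Real.norm_of_nonneg hpos.le,
      div_one, one_div_mul_eq_div, div_le_one hpos] at hschwarz
  · have hconst : φ =ᶠ[𝓝 0] fun _ => a := by
      refine Complex.eventually_eq_of_isLocalMax_norm ?_ ?_
      · filter_upwards [isOpen_ball.mem_nhds h0] with z hz
        exact hd.differentiableAt (isOpen_ball.mem_nhds hz)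
      · filter_upwards [isOpen_ball.mem_nhds h0] with z hz
        simpa [← ha] using hmaps hz
    simp [hconst.deriv_eq, ha]

theorem norm_iteratedDeriv_two_le_of_mapsTo_ball {w : ℂ → ℂ}
    (hd : DifferentiableOn ℂ w (ball 0 1)) (hmaps : MapsTo w (ball 0 1) (closedBall 0 1))
    (h0 : w 0 = 0) :
    ‖iteratedDeriv 2 w 0 / 2‖ ≤ 1 - ‖deriv w 0‖ ^ 2 := by
  have hball : ball (0 : ℂ) 1 ∈ 𝓝 0 := ball_mem_nhds 0 one_pos
  set φ := dslope w 0
  have hφd : DifferentiableOn ℂ φ (ball 0 1) := (differentiableOn_dslope hball).2 hd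
  have hφmaps : MapsTo φ (ball 0 1) (closedBall 0 1) := fun z hz => by
    simpa using Complex.norm_dslope_le_div_of_mapsTo_ball hd (by rwa [h0]) hz
  have hw : w = fun z => z * φ z := funext fun z => by
    simpa [h0] using (sub_smul_dslope w 0 z).symm
  have hφ : ContDiffAt ℂ 2 φ 0 := (hφd.analyticAt hball).contDiffAt
  have h2 : iteratedDeriv 2 w 0 = 2 * deriv φ 0 := by
    rw [hw, iteratedDeriv_fun_mul (f := fun z => z) contDiffAt_fun_id hφ]
    simp [iteratedDeriv_fun_id_zero]
  rw [h2, mul_div_cancel_left₀ _ two_ne_zero, ← dslope_same w 0]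
  exact norm_deriv_le_one_sub_sq_norm hφd hφmaps

theorem norm_sub_one_le_norm_add_one {z : ℂ} (hz : 0 ≤ z.re) : ‖z - 1‖ ≤ ‖z + 1‖ := by
  rw [← sq_le_sq₀ (norm_nonneg _) (norm_nonneg _), Complex.sq_norm, Complex.sq_norm]
  simp only [normSq_apply, sub_re, sub_im, add_re, add_im, one_re, one_im]
  nlinarith

theorem add_one_ne_zero_of_re_nonneg {z : ℂ} (hz : 0 ≤ z.re) : z + 1 ≠ 0 := fun h => by
  have := congrArg re h
  simp only [add_re, one_re, zero_re] at this
  linarith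

attribute [local fun_prop] AnalyticAt.contDiffAt in
theorem norm_iteratedDeriv_two_sub_sq_le_of_re_pos {p : ℂ → ℂ}
    (hd : DifferentiableOn ℂ p (ball 0 1)) (hre : ∀ z ∈ ball (0 : ℂ) 1, 0 < (p z).re)
    (h0 : p 0 = 1) :
    ‖iteratedDeriv 2 p 0 / 2 - deriv p 0 ^ 2 / 2‖ ≤ 2 - ‖deriv p 0‖ ^ 2 / 2 := by
  have hball : ball (0 : ℂ) 1 ∈ 𝓝 0 := ball_mem_nhds 0 one_pos
  have hne : ∀ z ∈ ball (0 : ℂ) 1, p z + 1 ≠ 0 := fun z hz =>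
    add_one_ne_zero_of_re_nonneg (hre z hz).le
  set w := fun z => (p z - 1) / (p z + 1)
  have hwd : DifferentiableOn ℂ w (ball 0 1) := (hd.sub_const 1).div (hd.add_const 1) hne
  have hwmaps : MapsTo w (ball 0 1) (closedBall 0 1) := fun z hz => by
    rw [mem_closedBall_zero_iff, norm_div]
    exact div_le_one_of_le₀ (norm_sub_one_le_norm_add_one (hre z hz).le) (norm_nonneg _)
  have hw0 : w 0 = 0 := by simp [w, h0]
  have hcayley : (fun z => w z * (p z + 1)) =ᶠ[𝓝 0] fun z => p z - 1 := by
    filter_upwards [hball] with z hz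
    exact div_mul_cancel₀ _ (hne z hz)
  have hp : AnalyticAt ℂ p 0 := hd.analyticAt hball
  have hw : AnalyticAt ℂ w 0 := hwd.analyticAt hball
  have h1 := hcayley.iteratedDeriv_eq 1
  have h2 := hcayley.iteratedDeriv_eq 2
  simp (discharger := fun_prop) only [iteratedDeriv_fun_mul, iteratedDeriv_fun_add,
    iteratedDeriv_fun_sub, iteratedDeriv_const] at h1 h2
  simp [Finset.sum_range_succ, h0, hw0] at h1 h2
  have hcoeff : iteratedDeriv 2 p 0 / 2 - deriv p 0 ^ 2 / 2 = 2 * (iteratedDeriv 2 w 0 / 2) := by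
    rw [← h2, ← h1]; ring
  rw [hcoeff, ← h1, norm_mul, norm_mul, one_add_one_eq_two, Complex.norm_two]
  linarith [norm_iteratedDeriv_two_le_of_mapsTo_ball hwd hwmaps hw0]

/-- The difference of the squares of the two sides is
`(x + 1/5)² (15x² - 10x + 31) + y² (30x² - 4x + 78/5 + 15y²)` for `c = x + iy`. -/
theorem norm_sq_add_two_mul_sub_three_le (c : ℂ) :
    ‖c ^ 2 + 2 * c - 3‖ ≤ 16 / 5 + 4 * ‖c‖ ^ 2 := by
  rw [← sq_le_sq₀ (norm_nonneg _) (by positivity), Complex.sq_norm, Complex.sq_norm,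
    normSq_apply, normSq_apply]
  simp only [sub_re, add_re, mul_re, pow_two, sub_im, add_im, mul_im, re_ofNat, im_ofNat]
  have h₁ : 0 ≤ 15 * c.re ^ 2 - 10 * c.re + 31 := by nlinarith [sq_nonneg (c.re - 1 / 3)]
  have h₂ : 0 ≤ 30 * c.re ^ 2 - 4 * c.re + 78 / 5 + 15 * c.im ^ 2 := by
    nlinarith [sq_nonneg (c.re - 1 / 15), sq_nonneg c.im]
  nlinarith [mul_nonneg (sq_nonneg (c.re + 1 / 5)) h₁, mul_nonneg (sq_nonneg c.im) h₂]

noncomputable def secondLogCoeff (f : ℂ → ℂ) : ℂ :=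
  (iteratedDeriv 3 f 0 / 6 - (iteratedDeriv 2 f 0 / 2) ^ 2 / 2) / 2

noncomputable def caratheodoryF3 (f : ℂ → ℂ) (z : ℂ) : ℂ := (1 - z + z ^ 2) * deriv f z

attribute [local fun_prop] AnalyticAt.contDiffAt AnalyticAt.deriv in
theorem secondLogCoeff_eq {f : ℂ → ℂ} (hf : AnalyticAt ℂ f 0) (hf1 : deriv f 0 = 1) :
    secondLogCoeff f =
      (iteratedDeriv 2 (caratheodoryF3 f) 0 / 2 - deriv (caratheodoryF3 f) 0 ^ 2 / 2) / 6 +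
        (deriv (caratheodoryF3 f) 0 ^ 2 + 2 * deriv (caratheodoryF3 f) 0 - 3) / 48 := by
  have hp (n : ℕ) : iteratedDeriv n (caratheodoryF3 f) 0 = ∑ i ∈ .range (n + 1),
      n.choose i * iteratedDeriv i (fun z : ℂ => 1 - z + z ^ 2) 0 *
        iteratedDeriv (n - i) (deriv f) 0 :=
    iteratedDeriv_fun_mul (by fun_prop) (by fun_prop)
  have h1 := hp 1
  have h2 := hp 2
  simp (discharger := fun_prop) only [Finset.sum_range_succ, iteratedDeriv_fun_add,
    iteratedDeriv_const_sub one_pos, iteratedDeriv_const_sub two_pos, iteratedDeriv_neg,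
    iteratedDeriv_fun_pow_zero, iteratedDeriv_fun_id_zero, ← iteratedDeriv_succ'] at h1 h2
  simp [hf1] at h1 h2
  rw [h1, h2, secondLogCoeff]
  ring

theorem norm_secondLogCoeff_le {f : ℂ → ℂ} (hf : AnalyticOnNhd ℂ f (ball 0 1))
    (hf1 : deriv f 0 = 1) (hre : ∀ z ∈ ball (0 : ℂ) 1, 0 < (caratheodoryF3 f z).re) :
    ‖secondLogCoeff f‖ ≤ 2 / 5 := by
  rw [secondLogCoeff_eq (hf 0 (mem_ball_self one_pos)) hf1]
  set p := caratheodoryF3 f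
  have hp : DifferentiableOn ℂ p (ball 0 1) :=
    (((differentiable_id.const_sub 1).add (differentiable_id.pow 2)).differentiableOn).mul
      hf.deriv.differentiableOn
  have hp0 : p 0 = 1 := by simp [p, caratheodoryF3, hf1]
  have hX := norm_iteratedDeriv_two_sub_sq_le_of_re_pos hp hre hp0
  have hc := norm_sq_add_two_mul_sub_three_le (deriv p 0)
  calc _ ≤ ‖iteratedDeriv 2 p 0 / 2 - deriv p 0 ^ 2 / 2‖ / 6 +
          ‖deriv p 0 ^ 2 + 2 * deriv p 0 - 3‖ / 48 := by
        refine (norm_add_le _ _).trans_eq ?_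
        simp only [norm_div, RCLike.norm_ofNat]
    _ ≤ (2 - ‖deriv p 0‖ ^ 2 / 2) / 6 + (16 / 5 + 4 * ‖deriv p 0‖ ^ 2) / 48 := by gcongr
    _ = 2 / 5 := by ring

/-- For `|b| ≤ 2` both roots of `1 + b z + z²` lie on the unit circle. -/
theorem one_add_mul_add_sq_mem_slitPlane {b : ℝ} (hb : |b| ≤ 2) {z : ℂ} (hz : ‖z‖ < 1) :
    1 + b * z + z ^ 2 ∈ slitPlane := by
  have hxy : z.re * z.re + z.im * z.im < 1 := by
    rw [← normSq_apply, ← Complex.sq_norm]; nlinarith [norm_nonneg z]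
  obtain ⟨hb₁, hb₂⟩ := abs_le.1 hb
  rw [mem_slitPlane_iff]
  simp only [add_re, add_im, one_re, one_im, mul_re, mul_im, ofReal_re, ofReal_im, pow_two]
  by_cases him : 0 + (b * z.im + 0 * z.re) + (z.re * z.im + z.im * z.re) = 0
  · left
    have : z.im * (2 * z.re + b) = 0 := by linarith
    rcases mul_eq_zero.1 this with hy | hx
    · rw [hy] at hxy ⊢
      have h₁ : 0 < 1 + z.re := by nlinarith
      have h₂ : 0 < 1 - z.re := by nlinarith
      nlinarith [mul_nonneg (mul_pos h₁ h₁).le (by linarith : (0 : ℝ) ≤ 2 + b),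
        mul_nonneg (mul_pos h₂ h₂).le (by linarith : (0 : ℝ) ≤ 2 - b), mul_pos h₁ h₂]
    · nlinarith
  · exact Or.inr him

theorem one_sub_add_sq_mem_slitPlane {z : ℂ} (hz : ‖z‖ < 1) : 1 - z + z ^ 2 ∈ slitPlane := by
  simpa [← sub_eq_add_neg] using one_add_mul_add_sq_mem_slitPlane (b := -1) (by norm_num) hz

theorem one_add_div_five_add_sq_mem_slitPlane {z : ℂ} (hz : ‖z‖ < 1) :
    1 + z / 5 + z ^ 2 ∈ slitPlane := by
  simpa [div_eq_inv_mul] using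
    one_add_mul_add_sq_mem_slitPlane (b := 1 / 5) (by norm_num [abs_of_pos]) hz

noncomputable def extremalF3 (z : ℂ) : ℂ :=
  5 / 6 * (log (1 + z / 5 + z ^ 2) - log (1 - z + z ^ 2))

theorem hasDerivAt_extremalF3 {z : ℂ} (hz : ‖z‖ < 1) :
    HasDerivAt extremalF3 ((1 - z ^ 2) / ((1 - z + z ^ 2) * (1 + z / 5 + z ^ 2))) z := by
  have h₁ := one_sub_add_sq_mem_slitPlane hz
  have h₂ := one_add_div_five_add_sq_mem_slitPlane hz
  have hq₁ : HasDerivAt (fun z : ℂ => 1 - z + z ^ 2) (-1 + 2 * z) z := by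
    simpa using ((hasDerivAt_id z).const_sub 1).fun_add (hasDerivAt_pow 2 z)
  have hq₂ : HasDerivAt (fun z : ℂ => 1 + z / 5 + z ^ 2) (1 / 5 + 2 * z) z := by
    simpa using (((hasDerivAt_id z).div_const 5).const_add 1).fun_add (hasDerivAt_pow 2 z)
  refine (((hq₂.clog h₂).fun_sub (hq₁.clog h₁)).const_mul (5 / 6 : ℂ)).congr_deriv ?_
  have hq₁0 := slitPlane_ne_zero h₁
  have hq₂0 := slitPlane_ne_zero h₂
  rw [div_sub_div _ _ hq₂0 hq₁0, mul_div_assoc',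
    div_eq_div_iff (mul_ne_zero hq₂0 hq₁0) (mul_ne_zero hq₁0 hq₂0)]
  ring

theorem analyticOnNhd_extremalF3 : AnalyticOnNhd ℂ extremalF3 (ball 0 1) :=
  DifferentiableOn.analyticOnNhd (fun _ hz =>
    (hasDerivAt_extremalF3 (mem_ball_zero_iff.1 hz)).differentiableAt.differentiableWithinAt)
    isOpen_ball

theorem caratheodoryF3_extremalF3 {z : ℂ} (hz : ‖z‖ < 1) :
    caratheodoryF3 extremalF3 z = (1 - z ^ 2) / (1 + z / 5 + z ^ 2) := by
  rw [caratheodoryF3, (hasDerivAt_extremalF3 hz).deriv, mul_div_assoc',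
    mul_div_mul_left _ _ (slitPlane_ne_zero (one_sub_add_sq_mem_slitPlane hz))]

theorem deriv_extremalF3_zero : deriv extremalF3 0 = 1 := by
  simp [(hasDerivAt_extremalF3 (by simp : ‖(0 : ℂ)‖ < 1)).deriv]

theorem re_caratheodoryF3_extremalF3_pos {z : ℂ} (hz : ‖z‖ < 1) :
    0 < (caratheodoryF3 extremalF3 z).re := by
  rw [caratheodoryF3_extremalF3 hz]
  have hxy : z.re * z.re + z.im * z.im < 1 := by
    rw [← normSq_apply, ← Complex.sq_norm]; nlinarith [norm_nonneg z]
  rw [div_re, ← add_div]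
  refine div_pos ?_ (normSq_pos.2 (slitPlane_ne_zero (one_add_div_five_add_sq_mem_slitPlane hz)))
  have hnum : (1 - z ^ 2).re * (1 + z / 5 + z ^ 2).re + (1 - z ^ 2).im * (1 + z / 5 + z ^ 2).im =
      (1 - (z.re * z.re + z.im * z.im)) * (1 + (z.re * z.re + z.im * z.im) + z.re / 5) := by
    simp [pow_two]
    ring
  rw [hnum]
  exact mul_pos (by linarith) (by nlinarith [sq_nonneg (z.re + 1 / 10)])

attribute [local fun_prop] AnalyticAt.contDiffAt AnalyticAt.deriv in
theorem secondLogCoeff_extremalF3 : secondLogCoeff extremalF3 = -2 / 5 := by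
  have hf : AnalyticAt ℂ extremalF3 0 := analyticOnNhd_extremalF3 0 (mem_ball_self one_pos)
  have hf1 := deriv_extremalF3_zero
  have hp : AnalyticAt ℂ (caratheodoryF3 extremalF3) 0 := by unfold caratheodoryF3; fun_prop
  have hp0 : caratheodoryF3 extremalF3 0 = 1 := by simp [caratheodoryF3, hf1]
  have hquot : (fun z => caratheodoryF3 extremalF3 z * (1 + z / 5 + z ^ 2)) =ᶠ[𝓝 0]
      fun z => 1 - z ^ 2 := by
    filter_upwards [ball_mem_nhds (0 : ℂ) one_pos] with z hz
    rw [caratheodoryF3_extremalF3 (mem_ball_zero_iff.1 hz), div_mul_cancel₀ _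
      (slitPlane_ne_zero (one_add_div_five_add_sq_mem_slitPlane (mem_ball_zero_iff.1 hz)))]
  have h1 := hquot.iteratedDeriv_eq 1
  have h2 := hquot.iteratedDeriv_eq 2
  simp (discharger := fun_prop) only [iteratedDeriv_fun_mul, Finset.sum_range_succ,
    iteratedDeriv_fun_add, iteratedDeriv_const_sub one_pos, iteratedDeriv_const_sub two_pos,
    iteratedDeriv_neg, iteratedDeriv_div_const, iteratedDeriv_fun_pow_zero,
    iteratedDeriv_fun_id_zero] at h1 h2
  simp [hp0, iteratedDeriv_const] at h1 h2
  have hp1 : deriv (caratheodoryF3 extremalF3) 0 = -1 / 5 := by linear_combination h1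
  have hp2 : iteratedDeriv 2 (caratheodoryF3 extremalF3) 0 = -98 / 25 := by
    linear_combination h2 - 2 / 5 * h1
  rw [secondLogCoeff_eq hf hf1, hp1, hp2]
  norm_num

theorem F3_gamma2 :
    (∀ f : ℂ → ℂ, AnalyticOn ℂ f (ball 0 1) → f 0 = 0 → deriv f 0 = 1 →
      (∀ z ∈ ball (0:ℂ) 1, 0 < ((1 - z + z^2) * deriv f z).re) →
      ‖(iteratedDeriv 3 f 0 / 6 - (iteratedDeriv 2 f 0 / 2) ^ 2 / 2) / 2‖ ≤ 2/5) ∧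
    ∃ f : ℂ → ℂ, AnalyticOn ℂ f (ball 0 1) ∧ f 0 = 0 ∧ deriv f 0 = 1 ∧
      (∀ z ∈ ball (0:ℂ) 1, 0 < ((1 - z + z^2) * deriv f z).re) ∧
      ‖(iteratedDeriv 3 f 0 / 6 - (iteratedDeriv 2 f 0 / 2) ^ 2 / 2) / 2‖ = 2/5 := by
  refine ⟨fun f hf _ hf1 hre => ?_, extremalF3, analyticOnNhd_extremalF3.analyticOn,
    by simp [extremalF3], deriv_extremalF3_zero,
    fun z hz => re_caratheodoryF3_extremalF3_pos (mem_ball_zero_iff.1 hz), ?_⟩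
  · exact norm_secondLogCoeff_le (isOpen_ball.analyticOn_iff_analyticOnNhd.1 hf) hf1 hre
  · change ‖secondLogCoeff extremalF3‖ = 2 / 5
    rw [secondLogCoeff_extremalF3]
    norm_num
end
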